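/- Define lambda_mu^{pm}(K) = kappa/2 + mu(kappa/2 + 1 - cos K) ± sqrt(P_mu(cos K))/2, where P_mu(t) = (kappa-2t+2)^2 mu^2 + 2 kappa(kappa+2t-2) mu + kappa^2. Then for mu > 0 sufficiently small, the derivatives satisfy |(lambda_mu^+)'(K)| ≤ mu |K| and |(lambda_mu^-)'(K)| ≤ 2 mu |K| for all real K. -/

import Mathlib

/-!
Writing `Q(t) = 2μt + κ - (κ+2)μ`, one has `P_μ(t) = Q(t)² + 4κ²μ` and `P_μ' = 4μQ`, so
`(λ_μ^±)'(K) = μ sin K (1 ∓ Q(cos K) / √(P_μ(cos K)))`. The ratio `Q/√P_μ` lies in `[-1, 1]`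
for `μ ≥ 0`, and in `[0, 1]` once `μ(κ+4) ≤ κ`, since then `Q ≥ 0` on `[-1, 1]`. Hence
`|1 - Q/√P_μ| ≤ 1`, `|1 + Q/√P_μ| ≤ 2`, and `|sin K| ≤ |K|` finishes the estimate.
-/

open Real

noncomputable section

namespace Dispersion

variable {κ μ : ℝ}

/-- The polynomial `P_μ(t)` under the square root. -/
def discr (κ μ t : ℝ) : ℝ :=
  (κ - 2*t + 2)^2 * μ^2 + 2*κ*(κ + 2*t - 2)*μ + κ^2

def lambdaPlus (κ μ K : ℝ) : ℝ :=
  κ/2 + μ*(κ/2 + 1 - cos K) + √(discr κ μ (cos K)) / 2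

def lambdaMinus (κ μ K : ℝ) : ℝ :=
  κ/2 + μ*(κ/2 + 1 - cos K) - √(discr κ μ (cos K)) / 2

def discrRatio (κ μ t : ℝ) : ℝ :=
  (2*μ*t + κ - (κ+2)*μ) / √(discr κ μ t)

lemma discr_eq_sq_add (κ μ t : ℝ) :
    discr κ μ t = (2*μ*t + κ - (κ+2)*μ)^2 + 4*κ^2*μ := by
  unfold discr; ring

lemma discr_pos (hκ : κ ≠ 0) (hμ : 0 < μ) (t : ℝ) : 0 < discr κ μ t := by
  rw [discr_eq_sq_add]; positivity

lemma hasDerivAt_discr (κ μ t : ℝ) :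
    HasDerivAt (discr κ μ) (4*μ*(2*μ*t + κ - (κ+2)*μ)) t := by
  have hQ := (((hasDerivAt_id' t).const_mul (2*μ)).add_const κ).sub_const ((κ+2)*μ)
  rw [show discr κ μ = _ from funext (discr_eq_sq_add κ μ)]
  refine ((hQ.fun_pow 2).add_const (4*κ^2*μ)).congr_deriv ?_
  norm_num
  ring

lemma hasDerivAt_half_sqrt_discr_cos (hκ : κ ≠ 0) (hμ : 0 < μ) (K : ℝ) :
    HasDerivAt (fun K => √(discr κ μ (cos K)) / 2) (-(μ * sin K * discrRatio κ μ (cos K))) K := by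
  have hP := discr_pos hκ hμ (cos K)
  have hPcos := (hasDerivAt_discr κ μ (cos K)).comp K (hasDerivAt_cos K)
  refine ((hPcos.sqrt hP.ne').div_const 2).congr_deriv ?_
  rw [discrRatio, Function.comp_apply]
  field_simp
  ring

lemma hasDerivAt_center (κ μ K : ℝ) :
    HasDerivAt (fun K => κ/2 + μ*(κ/2 + 1 - cos K)) (μ * sin K) K := by
  refine ((((hasDerivAt_cos K).const_sub (κ/2 + 1)).const_mul μ).const_add (κ/2)).congr_deriv ?_
  ring

lemma hasDerivAt_lambdaPlus (hκ : κ ≠ 0) (hμ : 0 < μ) (K : ℝ) :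
    HasDerivAt (lambdaPlus κ μ) (μ * sin K * (1 - discrRatio κ μ (cos K))) K :=
  ((hasDerivAt_center κ μ K).add (hasDerivAt_half_sqrt_discr_cos hκ hμ K)).congr_deriv (by ring)

lemma hasDerivAt_lambdaMinus (hκ : κ ≠ 0) (hμ : 0 < μ) (K : ℝ) :
    HasDerivAt (lambdaMinus κ μ) (μ * sin K * (1 + discrRatio κ μ (cos K))) K :=
  ((hasDerivAt_center κ μ K).sub (hasDerivAt_half_sqrt_discr_cos hκ hμ K)).congr_deriv (by ring)

lemma abs_discrRatio_le_one (hμ : 0 ≤ μ) (t : ℝ) : |discrRatio κ μ t| ≤ 1 := by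
  rw [discrRatio, abs_div, abs_of_nonneg (sqrt_nonneg _)]
  refine div_le_one_of_le₀ (abs_le_sqrt ?_) (sqrt_nonneg _)
  rw [discr_eq_sq_add]
  exact le_add_of_nonneg_right (by positivity)

lemma discrRatio_nonneg (hμ : 0 ≤ μ) (hμκ : μ * (κ + 4) ≤ κ) {t : ℝ} (ht : -1 ≤ t) :
    0 ≤ discrRatio κ μ t :=
  div_nonneg (by nlinarith) (sqrt_nonneg _)

lemma abs_mul_sin_mul_le {C c : ℝ} (hμ : 0 ≤ μ) (hc : |c| ≤ C) (K : ℝ) :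
    |μ * sin K * c| ≤ C * μ * |K| := by
  rw [abs_mul, abs_mul, abs_of_nonneg hμ]
  have h := mul_le_mul abs_sin_le_abs hc (abs_nonneg c) (abs_nonneg K)
  linarith [mul_le_mul_of_nonneg_left h hμ]

lemma abs_deriv_lambdaPlus_le (hμ : 0 < μ) (hμκ : μ * (κ + 4) ≤ κ) (K : ℝ) :
    |deriv (lambdaPlus κ μ) K| ≤ μ * |K| := by
  have hκ : κ ≠ 0 := by rintro rfl; linarith
  have hr₀ := discrRatio_nonneg hμ.le hμκ (neg_one_le_cos K)
  have hr₁ := (abs_le.1 (abs_discrRatio_le_one (κ := κ) hμ.le (cos K))).2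
  rw [(hasDerivAt_lambdaPlus hκ hμ K).deriv]
  have hc : |1 - discrRatio κ μ (cos K)| ≤ 1 := abs_le.2 ⟨by linarith, by linarith⟩
  simpa only [one_mul] using abs_mul_sin_mul_le hμ.le hc K

lemma abs_deriv_lambdaMinus_le (hκ : κ ≠ 0) (hμ : 0 < μ) (K : ℝ) :
    |deriv (lambdaMinus κ μ) K| ≤ 2 * μ * |K| := by
  have hr := abs_le.1 (abs_discrRatio_le_one (κ := κ) hμ.le (cos K))
  rw [(hasDerivAt_lambdaMinus hκ hμ K).deriv]
  exact abs_mul_sin_mul_le hμ.le (abs_le.2 ⟨by linarith, by linarith⟩) K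

end Dispersion

end

open Dispersion in
theorem stmt2 (κ : ℝ) (hκ : 0 < κ) :
    ∃ μ₀ > 0, ∀ μ : ℝ, 0 < μ → μ < μ₀ →
      (∀ K : ℝ,
        |deriv (fun K : ℝ =>
            κ/2 + μ*(κ/2 + 1 - Real.cos K)
              + Real.sqrt ((κ - 2*Real.cos K + 2)^2 * μ^2
                  + 2*κ*(κ + 2*Real.cos K - 2)*μ + κ^2) / 2) K| ≤ μ * |K|) ∧
      (∀ K : ℝ,
        |deriv (fun K : ℝ =>
            κ/2 + μ*(κ/2 + 1 - Real.cos K)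
              - Real.sqrt ((κ - 2*Real.cos K + 2)^2 * μ^2
                  + 2*κ*(κ + 2*Real.cos K - 2)*μ + κ^2) / 2) K| ≤ 2 * μ * |K|) := by
  refine ⟨κ / (κ + 4), by positivity, fun μ hμ hμ₀ => ⟨fun K => ?_, fun K => ?_⟩⟩
  · have hμκ : μ * (κ + 4) ≤ κ := ((lt_div_iff₀ (by positivity)).1 hμ₀).le
    exact abs_deriv_lambdaPlus_le hμ hμκ K
  · exact abs_deriv_lambdaMinus_le hκ.ne' hμ K
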